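/- (Helmholtz decomposition for elastic oscillations.) Assume additionally that λ + μ > 0 and Λ ≠ 0, so that ω₁ ≠ ω₂. Suppose u is of class C⁴ on the open set D and satisfies μ·Δu + (λ+μ)·grad(div u) + Λ·u = 0 at every point of D. Define u⁽ᵖ⁾ := (ω₂ − ω₁)⁻¹·(Δu + ω₂·u) and u⁽ˢ⁾ := (ω₁ − ω₂)⁻¹·(Δu + ω₁·u). Then at every point of D: (i) u = u⁽ᵖ⁾ + u⁽ˢ⁾; (ii) Δu⁽ᵖ⁾ + ω₁·u⁽ᵖ⁾ = 0 and curl u⁽ᵖ⁾ = 0; (iii) Δu⁽ˢ⁾ + ω₂·u⁽ˢ⁾ = 0 and div u⁽ˢ⁾ = 0. -/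

import Mathlib

noncomputable section

/-- Partial derivative of a scalar function on `ℝ³` in the `i`-th coordinate direction. -/
def pd (i : Fin 3) (f : (Fin 3 → ℝ) → ℝ) : (Fin 3 → ℝ) → ℝ :=
  fun x => fderiv ℝ f x (Pi.single i 1)

/-- Scalar Laplacian on `ℝ³`. -/
def lap (f : (Fin 3 → ℝ) → ℝ) : (Fin 3 → ℝ) → ℝ :=
  fun x => ∑ i : Fin 3, pd i (pd i f) x

/-- Componentwise (vector) Laplacian on `ℝ³`. -/
def vlap (v : (Fin 3 → ℝ) → (Fin 3 → ℝ)) : (Fin 3 → ℝ) → (Fin 3 → ℝ) :=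
  fun x j => lap (fun y => v y j) x

/-- Divergence of a vector field on `ℝ³`. -/
def divg (v : (Fin 3 → ℝ) → (Fin 3 → ℝ)) : (Fin 3 → ℝ) → ℝ :=
  fun x => ∑ i : Fin 3, pd i (fun y => v y i) x

/-- Gradient of a scalar function on `ℝ³`. -/
def grad (f : (Fin 3 → ℝ) → ℝ) : (Fin 3 → ℝ) → (Fin 3 → ℝ) :=
  fun x i => pd i f x

/-- Curl of a vector field on `ℝ³`. -/
def curl (v : (Fin 3 → ℝ) → (Fin 3 → ℝ)) : (Fin 3 → ℝ) → (Fin 3 → ℝ) :=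
  fun x => ![pd 1 (fun y => v y 2) x - pd 2 (fun y => v y 1) x,
             pd 2 (fun y => v y 0) x - pd 0 (fun y => v y 2) x,
             pd 0 (fun y => v y 1) x - pd 1 (fun y => v y 0) x]

/-!
Write `F = div u`. Taking the divergence of the Lamé equation gives `(λ + 2μ) ΔF + Λ F = 0`,
i.e. `(Δ + ω₁) F = 0`. Applying `Δ` to the equation and eliminating `∂ⱼ ΔF = -ω₁ ∂ⱼ F` and
`(λ + μ) ∂ⱼ F = -(μ Δuⱼ + Λ uⱼ)` shows that every component satisfies the factored fourth-order
equation `(Δ + ω₁)(Δ + ω₂) uⱼ = 0`; since the two factors commute, `(Δ + ω₁) u⁽ᵖ⁾ = 0` and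
`(Δ + ω₂) u⁽ˢ⁾ = 0`. The equation itself reads `Δu + ω₂ u = -((λ + μ)/μ) grad F`, so `u⁽ᵖ⁾` is a
gradient and curl-free, while `div u⁽ˢ⁾` is a multiple of `(Δ + ω₁) F = 0`.
-/

open Set

local notation "ℝ³" => Fin 3 → ℝ

theorem ContDiffOn.differentiableAt_of_isOpen {𝕜 E F : Type*} [NontriviallyNormedField 𝕜]
    [NormedAddCommGroup E] [NormedSpace 𝕜 E] [NormedAddCommGroup F] [NormedSpace 𝕜 F]
    {n : WithTop ℕ∞} {f : E → F} {s : Set E} {x : E} (hf : ContDiffOn 𝕜 n f s) (hs : IsOpen s)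
    (hx : x ∈ s) (hn : n ≠ 0) : DifferentiableAt 𝕜 f x :=
  (hf.contDiffAt (hs.mem_nhds hx)).differentiableAt hn

section PartialDerivative

variable {D : Set ℝ³} {f g : ℝ³ → ℝ} {x : ℝ³}

theorem pd_add (hf : DifferentiableAt ℝ f x) (hg : DifferentiableAt ℝ g x) (i : Fin 3) :
    pd i (fun y => f y + g y) x = pd i f x + pd i g x := by
  simp [pd, fderiv_fun_add hf hg]

theorem pd_const_mul (c : ℝ) (f : ℝ³ → ℝ) (i : Fin 3) :
    pd i (fun y => c * f y) = fun y => c * pd i f y := by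
  ext x
  simp only [pd, ← smul_eq_mul]
  rw [← Pi.smul_def, fderiv_const_smul_field]
  rfl

theorem pd_zero (i : Fin 3) : pd i 0 = 0 := by
  ext x
  simp [pd]

theorem pd_sum {ι : Type*} (s : Finset ι) {f : ι → ℝ³ → ℝ}
    (hf : ∀ k ∈ s, DifferentiableAt ℝ (f k) x) (i : Fin 3) :
    pd i (fun y => ∑ k ∈ s, f k y) x = ∑ k ∈ s, pd i (f k) x := by
  simp [pd, fderiv_fun_sum hf]

theorem pd_eqOn (hD : IsOpen D) (h : EqOn f g D) (i : Fin 3) : EqOn (pd i f) (pd i g) D :=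
  fun x hx => by simp only [pd, (h.eventuallyEq_of_mem (hD.mem_nhds hx)).fderiv_eq]

theorem ContDiffOn.pd {m n : WithTop ℕ∞} (hf : ContDiffOn ℝ n f D) (hD : IsOpen D)
    (hmn : m + 1 ≤ n) (i : Fin 3) : ContDiffOn ℝ m (pd i f) D :=
  (hf.fderiv_of_isOpen hD hmn).clm_apply contDiffOn_const

theorem pd_pd_comm (hf : ContDiffOn ℝ 2 f D) (hD : IsOpen D) (hx : x ∈ D) (i j : Fin 3) :
    pd i (pd j f) x = pd j (pd i f) x := by
  have hf' : ContDiffAt ℝ 2 f x := hf.contDiffAt (hD.mem_nhds hx)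
  have hdf : DifferentiableAt ℝ (fderiv ℝ f) x :=
    (hf'.fderiv_right le_rfl).differentiableAt one_ne_zero
  have hsnd : ∀ k l : Fin 3,
      pd k (pd l f) x = fderiv ℝ (fderiv ℝ f) x (Pi.single k 1) (Pi.single l 1) := by
    intro k l
    change fderiv ℝ (fun y => fderiv ℝ f y (Pi.single l 1)) x (Pi.single k 1) = _
    rw [fderiv_clm_apply hdf (differentiableAt_const _)]
    simp
  rw [hsnd, hsnd, hf'.isSymmSndFDerivAt (by simp)]

end PartialDerivative

section Laplacian

variable {D : Set ℝ³} {f g : ℝ³ → ℝ} {x : ℝ³}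

theorem ContDiffOn.lap {m n : WithTop ℕ∞} (hf : ContDiffOn ℝ n f D) (hD : IsOpen D)
    (hmn : m + 2 ≤ n) : ContDiffOn ℝ m (lap f) D :=
  .sum fun i _ =>
    (hf.pd hD (m := m + 1) (by rwa [add_assoc, one_add_one_eq_two]) i).pd hD le_rfl i

theorem lap_eqOn (hD : IsOpen D) (h : EqOn f g D) : EqOn (lap f) (lap g) D := fun _ hx =>
  Finset.sum_congr rfl fun i _ => pd_eqOn hD (pd_eqOn hD h i) i hx

theorem lap_zero : lap 0 = 0 := by
  ext x
  simp [lap, pd_zero]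

theorem lap_const_mul (c : ℝ) (f : ℝ³ → ℝ) : lap (fun y => c * f y) = fun y => c * lap f y := by
  ext x
  simp [lap, pd_const_mul, Finset.mul_sum]

theorem lap_add (hD : IsOpen D) (hf : ContDiffOn ℝ 2 f D) (hg : ContDiffOn ℝ 2 g D)
    (hx : x ∈ D) : lap (fun y => f y + g y) x = lap f x + lap g x := by
  simp only [lap, ← Finset.sum_add_distrib]
  refine Finset.sum_congr rfl fun i _ => ?_
  have hpd : EqOn (pd i fun y => f y + g y) (fun y => pd i f y + pd i g y) D := fun y hy =>
    pd_add (hf.differentiableAt_of_isOpen hD hy two_ne_zero)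
      (hg.differentiableAt_of_isOpen hD hy two_ne_zero) i
  rw [pd_eqOn hD hpd i hx]
  exact pd_add ((hf.pd hD le_rfl i).differentiableAt_of_isOpen hD hx one_ne_zero)
    ((hg.pd hD le_rfl i).differentiableAt_of_isOpen hD hx one_ne_zero) i

theorem lap_sum {ι : Type*} (s : Finset ι) {f : ι → ℝ³ → ℝ} (hD : IsOpen D)
    (hf : ∀ k ∈ s, ContDiffOn ℝ 2 (f k) D) (hx : x ∈ D) :
    lap (fun y => ∑ k ∈ s, f k y) x = ∑ k ∈ s, lap (f k) x := by
  simp only [lap]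
  rw [Finset.sum_comm]
  refine Finset.sum_congr rfl fun i _ => ?_
  have hpd : EqOn (pd i fun y => ∑ k ∈ s, f k y) (fun y => ∑ k ∈ s, pd i (f k) y) D :=
    fun y hy => pd_sum s (fun k hk => (hf k hk).differentiableAt_of_isOpen hD hy two_ne_zero) i
  rw [pd_eqOn hD hpd i hx]
  exact pd_sum s (fun k hk => ((hf k hk).pd hD le_rfl i).differentiableAt_of_isOpen hD hx
    one_ne_zero) i

theorem pd_lap_comm (hf : ContDiffOn ℝ 3 f D) (hD : IsOpen D) (hx : x ∈ D) (i : Fin 3) :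
    pd i (lap f) x = lap (pd i f) x := calc
  pd i (lap f) x = ∑ k, pd i (pd k (pd k f)) x :=
    pd_sum _ (fun k _ => ((hf.pd hD (m := 2) (by norm_num) k).pd hD le_rfl k)
      |>.differentiableAt_of_isOpen hD hx one_ne_zero) i
  _ = ∑ k, pd k (pd i (pd k f)) x :=
    Finset.sum_congr rfl fun k _ => pd_pd_comm (hf.pd hD (by norm_num) k) hD hx i k
  _ = lap (pd i f) x :=
    Finset.sum_congr rfl fun k _ =>
      pd_eqOn hD (fun y hy => pd_pd_comm (hf.of_le (by norm_num)) hD hy i k) k hx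

end Laplacian

def helmholtz (ω : ℝ) (f : ℝ³ → ℝ) : ℝ³ → ℝ :=
  fun x => lap f x + ω * f x

section Helmholtz

variable {D : Set ℝ³} {f : ℝ³ → ℝ} {x : ℝ³}

theorem helmholtz_const_mul (ω c : ℝ) (f : ℝ³ → ℝ) (x : ℝ³) :
    helmholtz ω (fun y => c * f y) x = c * helmholtz ω f x := by
  simp only [helmholtz, lap_const_mul]
  ring

theorem helmholtz_helmholtz (hf : ContDiffOn ℝ 4 f D) (hD : IsOpen D) (hx : x ∈ D) (ω ω' : ℝ) :
    helmholtz ω (helmholtz ω' f) x = lap (lap f) x + (ω + ω') * lap f x + ω * ω' * f x := by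
  have hsplit :=
    lap_add hD (hf.lap hD le_rfl) ((contDiffOn_const (c := ω')).mul (hf.of_le (by norm_num))) hx
  unfold helmholtz
  rw [hsplit, lap_const_mul]
  ring

theorem helmholtz_comm (hf : ContDiffOn ℝ 4 f D) (hD : IsOpen D) (hx : x ∈ D) (ω ω' : ℝ) :
    helmholtz ω (helmholtz ω' f) x = helmholtz ω' (helmholtz ω f) x := by
  rw [helmholtz_helmholtz hf hD hx, helmholtz_helmholtz hf hD hx]
  ring

end Helmholtz

section VectorCalculus

variable {D : Set ℝ³} {f : ℝ³ → ℝ} {u v w : ℝ³ → ℝ³} {x : ℝ³}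

theorem ContDiffOn.divg {m n : WithTop ℕ∞} (hu : ContDiffOn ℝ n u D) (hD : IsOpen D)
    (hmn : m + 1 ≤ n) : ContDiffOn ℝ m (divg u) D :=
  .sum fun i _ => (contDiffOn_pi.1 hu i).pd hD hmn i

theorem divg_const_mul (c : ℝ) (v : ℝ³ → ℝ³) (x : ℝ³) :
    divg (fun y j => c * v y j) x = c * divg v x := by
  simp only [divg, pd_const_mul, Finset.mul_sum]

theorem divg_add (hv : ∀ i, DifferentiableAt ℝ (v · i) x)
    (hw : ∀ i, DifferentiableAt ℝ (w · i) x) :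
    divg (fun y j => v y j + w y j) x = divg v x + divg w x := by
  simp only [divg, ← Finset.sum_add_distrib]
  exact Finset.sum_congr rfl fun i _ => pd_add (hv i) (hw i) i

theorem divg_vlap (hu : ContDiffOn ℝ 3 u D) (hD : IsOpen D) (hx : x ∈ D) :
    divg (vlap u) x = lap (divg u) x := by
  have hui : ∀ i, ContDiffOn ℝ 3 (u · i) D := contDiffOn_pi.1 hu
  unfold divg
  rw [lap_sum _ hD (fun i _ => (hui i).pd hD (by norm_num) i) hx]
  exact Finset.sum_congr rfl fun i _ => pd_lap_comm (hui i) hD hx i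

theorem divg_helmholtz (hu : ContDiffOn ℝ 3 u D) (hD : IsOpen D) (hx : x ∈ D) (ω : ℝ) :
    divg (fun y j => helmholtz ω (u · j) y) x = helmholtz ω (divg u) x := by
  have hui : ∀ i, ContDiffOn ℝ 3 (u · i) D := contDiffOn_pi.1 hu
  change divg (fun y j => vlap u y j + ω * u y j) x = _
  have hΔ : ∀ i, DifferentiableAt ℝ (vlap u · i) x := fun i =>
    ((hui i).lap hD (by norm_num)).differentiableAt_of_isOpen hD hx one_ne_zero
  have hω : ∀ i, DifferentiableAt ℝ (fun y => ω * u y i) x := fun i =>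
    ((hui i).differentiableAt_of_isOpen hD hx three_ne_zero).const_mul ω
  rw [divg_add hΔ hω, divg_const_mul, divg_vlap hu hD hx]
  rfl

theorem curl_eqOn (hD : IsOpen D) (h : EqOn v w D) : EqOn (curl v) (curl w) D := fun x hx => by
  have hc : ∀ i k, pd i (v · k) x = pd i (w · k) x := fun i k =>
    pd_eqOn hD (fun y hy => congrFun (h hy) k) i hx
  simp only [curl, hc]

theorem curl_grad (hf : ContDiffOn ℝ 2 f D) (hD : IsOpen D) (hx : x ∈ D) :
    curl (grad f) x = 0 := by
  have h := pd_pd_comm hf hD hx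
  ext j
  fin_cases j <;> simp [curl, grad, h 1 2, h 2 0, h 0 1]

end VectorCalculus

def SolvesLameOn (μ lam Λ : ℝ) (u : ℝ³ → ℝ³) (D : Set ℝ³) : Prop :=
  ∀ x ∈ D, ∀ j : Fin 3, μ * vlap u x j + (lam + μ) * grad (divg u) x j + Λ * u x j = 0

namespace SolvesLameOn

variable {D : Set ℝ³} {u : ℝ³ → ℝ³} {μ lam Λ : ℝ} {x : ℝ³}

theorem component_eqOn_zero (h : SolvesLameOn μ lam Λ u D) (j : Fin 3) :
    EqOn (fun y => μ * lap (u · j) y + (lam + μ) * pd j (divg u) y + Λ * u y j) 0 D :=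
  fun x hx => h x hx j

theorem divg_eqOn_zero (h : SolvesLameOn μ lam Λ u D) (hD : IsOpen D)
    (hu : ContDiffOn ℝ 3 u D) :
    EqOn (fun y => (lam + 2 * μ) * lap (divg u) y + Λ * divg u y) 0 D := by
  intro x hx
  have hui : ∀ j, ContDiffOn ℝ 3 (u · j) D := contDiffOn_pi.1 hu
  have hL : ∀ j, DifferentiableAt ℝ (lap (u · j)) x := fun j =>
    ((hui j).lap hD le_rfl).differentiableAt_of_isOpen hD hx one_ne_zero
  have hG : ∀ j, DifferentiableAt ℝ (pd j (divg u)) x := fun j =>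
    ((hu.divg hD le_rfl).pd hD le_rfl j).differentiableAt_of_isOpen hD hx one_ne_zero
  have hU : ∀ j, DifferentiableAt ℝ (u · j) x := fun j =>
    (hui j).differentiableAt_of_isOpen hD hx three_ne_zero
  have hj : ∀ j, μ * pd j (lap (u · j)) x + (lam + μ) * pd j (pd j (divg u)) x
      + Λ * pd j (u · j) x = 0 := by
    intro j
    have h0 := pd_eqOn hD (h.component_eqOn_zero j) j hx
    rwa [pd_add (((hL j).const_mul μ).fun_add ((hG j).const_mul (lam + μ))) ((hU j).const_mul Λ),
      pd_add ((hL j).const_mul μ) ((hG j).const_mul (lam + μ)), pd_const_mul, pd_const_mul,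
      pd_const_mul, pd_zero] at h0
  calc (lam + 2 * μ) * lap (divg u) x + Λ * divg u x
      = μ * divg (vlap u) x + (lam + μ) * lap (divg u) x + Λ * divg u x := by
        rw [divg_vlap hu hD hx]
        ring
    _ = ∑ j, (μ * pd j (lap (u · j)) x + (lam + μ) * pd j (pd j (divg u)) x
          + Λ * pd j (u · j) x) := by
        simp only [Finset.sum_add_distrib, ← Finset.mul_sum]
        rfl
    _ = 0 := Finset.sum_eq_zero fun j _ => hj j

theorem component_fourth_order (h : SolvesLameOn μ lam Λ u D) (hD : IsOpen D)
    (hu : ContDiffOn ℝ 4 u D) (hx : x ∈ D) (j : Fin 3) :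
    μ * (lam + 2 * μ) * lap (lap (u · j)) x + Λ * (lam + 3 * μ) * lap (u · j) x
      + Λ ^ 2 * u x j = 0 := by
  have huj : ContDiffOn ℝ 4 (u · j) D := contDiffOn_pi.1 hu j
  have hF : ContDiffOn ℝ 3 (divg u) D := hu.divg hD (by norm_num)
  have hΔu : ContDiffOn ℝ 2 (lap (u · j)) D := huj.lap hD le_rfl
  have hgF : ContDiffOn ℝ 2 (pd j (divg u)) D := hF.pd hD (by norm_num) j
  have hlap_eq : μ * lap (lap (u · j)) x + (lam + μ) * pd j (lap (divg u)) x
      + Λ * lap (u · j) x = 0 := by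
    have h0 := lap_eqOn hD (h.component_eqOn_zero j) hx
    rw [lap_add hD (contDiffOn_const.mul hΔu |>.add (contDiffOn_const.mul hgF))
        (contDiffOn_const.mul (huj.of_le (by norm_num))) hx,
      lap_add hD (contDiffOn_const.mul hΔu) (contDiffOn_const.mul hgF) hx] at h0
    simpa only [lap_const_mul, lap_zero, Pi.zero_apply, ← pd_lap_comm hF hD hx] using h0
  have hpd_eq : (lam + 2 * μ) * pd j (lap (divg u)) x + Λ * pd j (divg u) x = 0 := by
    have h0 := pd_eqOn hD (h.divg_eqOn_zero hD (hu.of_le (by norm_num))) j hx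
    have hΔF := (hF.lap hD (by norm_num)).differentiableAt_of_isOpen hD hx one_ne_zero
    rwa [pd_add (hΔF.const_mul _) ((hF.differentiableAt_of_isOpen hD hx three_ne_zero).const_mul Λ),
      pd_const_mul, pd_const_mul, pd_zero] at h0
  have hlame : μ * lap (u · j) x + (lam + μ) * pd j (divg u) x + Λ * u x j = 0 := h x hx j
  linear_combination (lam + 2 * μ) * hlap_eq - (lam + μ) * hpd_eq + Λ * hlame

theorem helmholtz_divg_eq_zero (h : SolvesLameOn μ lam Λ u D) (hlam : lam + 2 * μ ≠ 0)
    (hD : IsOpen D) (hu : ContDiffOn ℝ 3 u D) (hx : x ∈ D) :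
    helmholtz (Λ / (lam + 2 * μ)) (divg u) x = 0 := by
  have h0 : (lam + 2 * μ) * lap (divg u) x + Λ * divg u x = 0 := h.divg_eqOn_zero hD hu hx
  rw [helmholtz]
  field_simp
  linear_combination h0

theorem helmholtz_helmholtz_eq_zero (h : SolvesLameOn μ lam Λ u D) (hμ : μ ≠ 0)
    (hlam : lam + 2 * μ ≠ 0) (hD : IsOpen D) (hu : ContDiffOn ℝ 4 u D) (hx : x ∈ D) (j : Fin 3) :
    helmholtz (Λ / (lam + 2 * μ)) (helmholtz (Λ / μ) (u · j)) x = 0 := by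
  rw [helmholtz_helmholtz (contDiffOn_pi.1 hu j) hD hx]
  field_simp
  linear_combination h.component_fourth_order hD hu hx j

theorem curl_const_mul_helmholtz_eq_zero (h : SolvesLameOn μ lam Λ u D) (hμ : μ ≠ 0)
    (hD : IsOpen D) (hu : ContDiffOn ℝ 3 u D) (hx : x ∈ D) (c : ℝ) :
    curl (fun y j => c * helmholtz (Λ / μ) (u · j) y) x = 0 := by
  have hgrad : EqOn (fun y j => c * helmholtz (Λ / μ) (u · j) y)
      (grad fun y => -(c * (lam + μ) / μ) * divg u y) D := fun y hy => by
    funext j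
    have h0 : μ * lap (u · j) y + (lam + μ) * pd j (divg u) y + Λ * u y j = 0 := h y hy j
    simp only [helmholtz, grad, pd_const_mul]
    field_simp
    linear_combination c * h0
  rw [curl_eqOn hD hgrad hx, curl_grad (contDiffOn_const.mul (hu.divg hD (by norm_num))) hD hx]

end SolvesLameOn

/-- Helmholtz decomposition for elastic oscillations: a `C⁴` solution of
`μ Δu + (λ+μ) grad (div u) + Λ u = 0` on an open set `D` (with `λ+μ > 0`, `Λ ≠ 0`) splits as
`u = u⁽ᵖ⁾ + u⁽ˢ⁾`, where `u⁽ᵖ⁾` is irrotational and satisfies `Δu⁽ᵖ⁾ + ω₁ u⁽ᵖ⁾ = 0`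
and `u⁽ˢ⁾` is solenoidal and satisfies `Δu⁽ˢ⁾ + ω₂ u⁽ˢ⁾ = 0`. -/
theorem helmholtz_decomposition_elastic
    (μ lam Λ : ℝ) (hμ : 0 < μ) (hlam : 0 < lam + 2 * μ)
    (hlamμ : 0 < lam + μ) (hΛ : Λ ≠ 0)
    (D : Set (Fin 3 → ℝ)) (hD : IsOpen D)
    (u : (Fin 3 → ℝ) → (Fin 3 → ℝ)) (hu : ContDiffOn ℝ 4 u D)
    (heq : ∀ x ∈ D, ∀ j : Fin 3,
      μ * vlap u x j + (lam + μ) * grad (divg u) x j + Λ * u x j = 0)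
    (ω₁ ω₂ : ℝ) (hω₁ : ω₁ = Λ / (lam + 2 * μ)) (hω₂ : ω₂ = Λ / μ)
    (up us : (Fin 3 → ℝ) → (Fin 3 → ℝ))
    (hup : up = fun x j => (ω₂ - ω₁)⁻¹ * (vlap u x j + ω₂ * u x j))
    (hus : us = fun x j => (ω₁ - ω₂)⁻¹ * (vlap u x j + ω₁ * u x j)) :
    ∀ x ∈ D,
      (∀ j : Fin 3, u x j = up x j + us x j) ∧
      (∀ j : Fin 3, vlap up x j + ω₁ * up x j = 0) ∧
      (∀ j : Fin 3, curl up x j = 0) ∧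
      (∀ j : Fin 3, vlap us x j + ω₂ * us x j = 0) ∧
      divg us x = 0 := by
  have hlame : SolvesLameOn μ lam Λ u D := heq
  have hu3 : ContDiffOn ℝ 3 u D := hu.of_le (by norm_num)
  subst hup hus
  have hω : ω₂ - ω₁ ≠ 0 := by
    rw [hω₁, hω₂, div_sub_div _ _ hμ.ne' hlam.ne',
      show Λ * (lam + 2 * μ) - μ * Λ = Λ * (lam + μ) by ring]
    exact div_ne_zero (mul_ne_zero hΛ hlamμ.ne') (mul_ne_zero hμ.ne' hlam.ne')
  have hω' : ω₁ - ω₂ ≠ 0 := sub_ne_zero.2 (sub_ne_zero.1 hω).symm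
  intro x hx
  refine ⟨fun j => by field_simp; ring, ?_⟩
  subst hω₁ hω₂
  refine ⟨fun j => ?_, fun j => ?_, fun j => ?_, ?_⟩
  · show helmholtz _ (fun y => _ * helmholtz (Λ / μ) (u · j) y) x = 0
    rw [helmholtz_const_mul, hlame.helmholtz_helmholtz_eq_zero hμ.ne' hlam.ne' hD hu hx j, mul_zero]
  · exact congrFun (hlame.curl_const_mul_helmholtz_eq_zero hμ.ne' hD hu3 hx _) j
  · show helmholtz _ (fun y => _ * helmholtz (Λ / (lam + 2 * μ)) (u · j) y) x = 0
    rw [helmholtz_const_mul, helmholtz_comm (contDiffOn_pi.1 hu j) hD hx,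
      hlame.helmholtz_helmholtz_eq_zero hμ.ne' hlam.ne' hD hu hx j, mul_zero]
  · show divg (fun y j => _ * helmholtz (Λ / (lam + 2 * μ)) (u · j) y) x = 0
    rw [divg_const_mul, divg_helmholtz hu3 hD hx,
      hlame.helmholtz_divg_eq_zero hlam.ne' hD hu3 hx, mul_zero]
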